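/- Let m > 0, ω > 0, let h satisfy 0 < hω < 2, and let (q₀, p₀) ∈ ℝ². Then the discrete velocity-Verlet trajectory is bounded for all time: there exists C > 0 such that ‖M_VV(h)ⁿ · (q₀, p₀)‖ ≤ C for every n ∈ ℕ. (Indeed, all iterates lie on the level set of the conserved modified energy H̃(q,p;h) = p²/(2m) + (mω²q²/2)(1 − h²ω²/4), which is a positive-definite quadratic form when 0 < hω < 2.) -/

import Mathlib

open Matrix

/-- The velocity-Verlet transition matrix for the harmonic oscillator. -/
noncomputable def MVV (m ω h : ℝ) : Matrix (Fin 2) (Fin 2) ℝ :=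
  !![1 - h ^ 2 * ω ^ 2 / 2, h / m;
     -h * m * ω ^ 2 * (1 - h ^ 2 * ω ^ 2 / 4), 1 - h ^ 2 * ω ^ 2 / 2]

/-! Every iterate lies on a level set of the modified energy `H̃`, a diagonal quadratic form
which is positive definite exactly when `h²ω² < 4`; such a level set is bounded. -/

/-- `H̃(q, p; h)` with `v = ![q, p]`. -/
noncomputable def modifiedEnergy (m ω h : ℝ) (v : Fin 2 → ℝ) : ℝ :=
  v 1 ^ 2 / (2 * m) + m * ω ^ 2 * v 0 ^ 2 / 2 * (1 - h ^ 2 * ω ^ 2 / 4)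

theorem modifiedEnergy_MVV_mulVec (m ω h : ℝ) (hm : m ≠ 0) (v : Fin 2 → ℝ) :
    modifiedEnergy m ω h (MVV m ω h *ᵥ v) = modifiedEnergy m ω h v := by
  simp only [modifiedEnergy, MVV, mulVec_fin_two, of_apply, cons_val_zero, cons_val_one,
    cons_val_fin_one]
  field_simp
  ring

theorem modifiedEnergy_MVV_pow_mulVec (m ω h : ℝ) (hm : m ≠ 0) (v : Fin 2 → ℝ) (n : ℕ) :
    modifiedEnergy m ω h (MVV m ω h ^ n *ᵥ v) = modifiedEnergy m ω h v := by
  induction n with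
  | zero => simp
  | succ n ih => rw [pow_succ', ← mulVec_mulVec, modifiedEnergy_MVV_mulVec m ω h hm, ih]

theorem norm_le_sqrt_weighted_sum_sq_div {ι : Type*} [Fintype ι] {c : ι → ℝ} {μ : ℝ}
    (hμ : 0 < μ) (hc : ∀ i, μ ≤ c i) (v : ι → ℝ) :
    ‖v‖ ≤ √((∑ i, c i * v i ^ 2) / μ) := by
  refine (pi_norm_le_iff_of_nonneg (Real.sqrt_nonneg _)).2 fun i ↦ ?_
  rw [Real.norm_eq_abs]
  refine Real.abs_le_sqrt ((le_div_iff₀ hμ).2 ?_)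
  calc v i ^ 2 * μ ≤ c i * v i ^ 2 := by nlinarith [hc i, sq_nonneg (v i)]
    _ ≤ ∑ j, c j * v j ^ 2 :=
      Finset.single_le_sum (fun j _ ↦ mul_nonneg (hμ.le.trans (hc j)) (sq_nonneg (v j)))
        (Finset.mem_univ i)

theorem velocity_verlet_trajectory_bounded
    (m ω h q₀ p₀ : ℝ) (hm : 0 < m)
    (h₁ : 0 < h * ω) (h₂ : h * ω < 2) :
    ∃ C > 0, ∀ n : ℕ, ‖(MVV m ω h ^ n).mulVec ![q₀, p₀]‖ ≤ C := by
  have hω : ω ≠ 0 := by rintro rfl; simp at h₁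
  have hstable : 0 < 1 - h ^ 2 * ω ^ 2 / 4 := by nlinarith
  set c : Fin 2 → ℝ := ![m * ω ^ 2 / 2 * (1 - h ^ 2 * ω ^ 2 / 4), 1 / (2 * m)]
  have hc : ∀ i, min (c 0) (c 1) ≤ c i := fun i ↦ by
    fin_cases i
    exacts [min_le_left _ _, min_le_right _ _]
  have hμ : 0 < min (c 0) (c 1) := lt_min (by simp [c]; positivity) (by simp [c]; positivity)
  have hsum : ∀ v : Fin 2 → ℝ, ∑ i, c i * v i ^ 2 = modifiedEnergy m ω h v := fun v ↦ by
    simp only [Fin.sum_univ_two, modifiedEnergy, c, cons_val_zero, cons_val_one]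
    ring
  set E := modifiedEnergy m ω h ![q₀, p₀]
  refine ⟨√(E / min (c 0) (c 1)) + 1, by positivity, fun n ↦ ?_⟩
  calc ‖(MVV m ω h ^ n).mulVec ![q₀, p₀]‖
      ≤ √((∑ i, c i * ((MVV m ω h ^ n) *ᵥ ![q₀, p₀]) i ^ 2) / min (c 0) (c 1)) :=
        norm_le_sqrt_weighted_sum_sq_div hμ hc _
    _ = √(E / min (c 0) (c 1)) := by
        rw [hsum, modifiedEnergy_MVV_pow_mulVec m ω h hm.ne']
    _ ≤ √(E / min (c 0) (c 1)) + 1 := le_add_of_nonneg_right zero_le_one
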